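/- Every element of the pseudo-orthogonal group O(p,q) can be written as a product of at most p+q reflections across non-degenerate hyperplanes in ℝ^{p+q}. -/

import Mathlib

/-!
Let `f` be an isometry fixing pointwise a nondegenerate subspace `S`, and induct on
`d = dim S^⊥`. If `f` fixes an anisotropic `v ∈ S^⊥`, enlarge `S` to `S ⊕ Kv`; if `f v - v` is
anisotropic, the reflection in `f v - v` maps `f v` to `v`, which reduces to the first case at
the cost of one reflection. Otherwise `f v - v` is isotropic for every anisotropic `v ∈ S^⊥`.
Since a nonzero quadratic polynomial has finitely many roots, moving `v` along lines `v + t u`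
shows that the whole image of `σ = f - 1` is totally isotropic; hence `σ² = 0` and `det f = 1`.
The image of `σ` and the fixed vectors of `f` in `S^⊥` are then totally isotropic subspaces of
`S^⊥` of complementary dimensions, so `d` is even. For an anisotropic `u ∈ S^⊥`, `r_u f` has
determinant `-1`, so it falls under one of the first two cases and is a product of an odd number
of reflections, hence of at most `d - 1`; so `f` is a product of at most `d`.
-/

open scoped BigOperators

/-- The standard bilinear form of signature (p,q) on ℝ^{p+q}. -/
def etaPQ (p q : ℕ) (v w : Fin (p + q) → ℝ) : ℝ :=
  ∑ i : Fin (p + q), if i.val < p then v i * w i else -(v i * w i)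

/-- The reflection across the hyperplane perpendicular to `e` (with η(e,e) ≠ 0). -/
noncomputable def reflectPQ (p q : ℕ) (e v : Fin (p + q) → ℝ) : Fin (p + q) → ℝ :=
  v - (2 * etaPQ p q e v / etaPQ p q e e) • e

open Module

theorem LinearMap.det_id_sub_smulRight {R M : Type*} [CommRing R] [AddCommGroup M] [Module R M]
    [Module.Free R M] [Module.Finite R M] (φ : Dual R M) (x : M) :
    LinearMap.det (LinearMap.id - φ.smulRight x) = 1 - φ x := by
  set b := Free.chooseBasis R M
  rw [← LinearMap.det_toMatrix b]
  have hM : LinearMap.toMatrix b b (LinearMap.id - φ.smulRight x) =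
      1 + Matrix.replicateCol Unit (-(b.repr x : _ → R)) * Matrix.replicateRow Unit (φ ∘ b) := by
    ext i j
    simp [LinearMap.toMatrix_apply, Matrix.one_apply, Finsupp.single_apply, eq_comm,
      sub_eq_add_neg, Matrix.mul_apply, mul_comm]
  rw [hM, Matrix.det_one_add_replicateCol_mul_replicateRow, dotProduct_neg, ← sub_eq_add_neg]
  conv_rhs => rw [← b.sum_repr x, map_sum]
  simp [dotProduct, mul_comm]

theorem LinearMap.det_one_add_of_isNilpotent {R M : Type*} [CommRing R] [IsDomain R]
    [AddCommGroup M] [Module R M] [Module.Free R M] [Module.Finite R M] {σ : Module.End R M}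
    (hσ : IsNilpotent σ) : LinearMap.det (1 + σ) = 1 := by
  have h := LinearMap.eval_charpoly (-σ) 1
  rw [hσ.neg.charpoly_eq_X_pow_finrank, map_one, sub_neg_eq_add] at h
  simpa using h.symm

theorem Submodule.finrank_range_add_finrank_ker_inf {K V W : Type*} [DivisionRing K]
    [AddCommGroup V] [Module K V] [FiniteDimensional K V] [AddCommGroup W] [Module K W]
    {S H : Submodule K V} (hSH : IsCompl S H) {σ : V →ₗ[K] W} (hσ : S ≤ LinearMap.ker σ) :
    finrank K (LinearMap.range σ) + finrank K ↥(LinearMap.ker σ ⊓ H) = finrank K H := by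
  have hker : LinearMap.ker σ = S ⊔ LinearMap.ker σ ⊓ H := by
    rw [inf_comm, ← sup_inf_assoc_of_le H hσ, hSH.sup_eq_top, top_inf_eq]
  have hdisj : S ⊓ (LinearMap.ker σ ⊓ H) = ⊥ :=
    eq_bot_iff.mpr <| le_trans (inf_le_inf_left _ inf_le_right) hSH.inf_eq_bot.le
  have h1 := Submodule.finrank_sup_add_finrank_inf_eq S (LinearMap.ker σ ⊓ H)
  rw [← hker, hdisj, finrank_bot, add_zero] at h1
  have h2 := LinearMap.finrank_range_add_finrank_ker σ
  have h3 := Submodule.finrank_add_eq_of_isCompl hSH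
  omega

theorem Module.End.list_prod_map_apply {α R M : Type*} [Semiring R] [AddCommMonoid M]
    [Module R M] (g : α → Module.End R M) (l : List α) (v : M) :
    (l.map g).prod v = l.foldr (fun a w => g a w) v := by
  induction l with
  | nil => rfl
  | cons a l ih => simp [Module.End.mul_apply, ih]

theorem Polynomial.eq_zero_of_eval_eq_zero_of_eval_ne_zero {R : Type*} [CommRing R] [IsDomain R]
    [Infinite R] {p q : Polynomial R} (hp : p ≠ 0) (h : ∀ t, p.eval t ≠ 0 → q.eval t = 0) :
    q = 0 := by
  have hpq : p * q = 0 := Polynomial.funext fun t => by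
    by_cases ht : p.eval t = 0 <;> simp [ht, h]
  exact (mul_eq_zero.mp hpq).resolve_left hp

namespace LinearMap.BilinForm

variable {K V : Type*} [Field K] [AddCommGroup V] [Module K V] {B : LinearMap.BilinForm K V}
  {S : Submodule K V} {f : Module.End K V}

section Reflection

noncomputable def reflection (B : LinearMap.BilinForm K V) (e : V) : Module.End K V :=
  Module.preReflection e ((2 / B e e) • B e)

theorem reflection_apply (e v : V) : B.reflection e v = v - (2 * B e v / B e e) • e := by
  simp [reflection, Module.preReflection_apply, mul_div_right_comm]

theorem reflection_mul_self {e : V} (he : B e e ≠ 0) : B.reflection e * B.reflection e = 1 :=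
  LinearMap.ext <| Module.involutive_preReflection (by simp [he])

theorem det_reflection [FiniteDimensional K V] {e : V} (he : B e e ≠ 0) :
    LinearMap.det (B.reflection e) = -1 := by
  rw [reflection, Module.preReflection, LinearMap.det_id_sub_smulRight, LinearMap.smul_apply,
    smul_eq_mul, div_mul_cancel₀ _ he]
  norm_num

theorem reflection_apply_of_isOrtho {e v : V} (h : B e v = 0) : B.reflection e v = v := by
  simp [reflection_apply, h]

theorem isOrthogonal_reflection (hBs : B.IsSymm) {e : V} (he : B e e ≠ 0) :
    B.IsOrthogonal (B.reflection e) := by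
  intro x y
  simp only [reflection_apply, map_sub, map_smul, LinearMap.sub_apply, LinearMap.smul_apply,
    smul_eq_mul, hBs.eq x e]
  field_simp
  ring

theorem reflection_sub_apply (hBs : B.IsSymm) {x y : V} (hxy : B x x = B y y)
    (he : B (x - y) (x - y) ≠ 0) : B.reflection (x - y) x = y := by
  have h2 : 2 * B (x - y) x = B (x - y) (x - y) := by
    simp only [map_sub, LinearMap.sub_apply, hBs.eq y x, hxy]
    ring
  rw [reflection_apply, h2, div_self he, one_smul, sub_sub_cancel]

end Reflection

section ProdReflections

def IsProdReflections (B : LinearMap.BilinForm K V) (f : Module.End K V) (n : ℕ) : Prop :=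
  ∃ l : List V, l.length ≤ n ∧ (∀ e ∈ l, B e e ≠ 0) ∧ (l.map B.reflection).prod = f

theorem isProdReflections_one (n : ℕ) : B.IsProdReflections 1 n :=
  ⟨[], by simp⟩

namespace IsProdReflections

variable {m n : ℕ}

theorem mono (h : B.IsProdReflections f m) (hmn : m ≤ n) : B.IsProdReflections f n :=
  let ⟨l, hl, hl'⟩ := h
  ⟨l, hl.trans hmn, hl'⟩

theorem reflection_mul {e : V} (he : B e e ≠ 0) (h : B.IsProdReflections f n) :
    B.IsProdReflections (B.reflection e * f) (n + 1) := by
  obtain ⟨l, hl, hl0, rfl⟩ := h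
  refine ⟨e :: l, by simpa using hl, ?_, by simp⟩
  simpa [he] using hl0

theorem of_reflection_mul {e : V} (he : B e e ≠ 0)
    (h : B.IsProdReflections (B.reflection e * f) n) : B.IsProdReflections f (n + 1) := by
  simpa [← mul_assoc, reflection_mul_self he] using h.reflection_mul he

theorem pred_of_det_eq_neg_one [FiniteDimensional K V] [CharZero K]
    (h : B.IsProdReflections f n) (hdet : LinearMap.det f = -1) (hn : Even n) :
    B.IsProdReflections f (n - 1) := by
  obtain ⟨l, hl, hl0, rfl⟩ := h
  have hdet_l : LinearMap.det (l.map B.reflection).prod = (-1) ^ l.length := by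
    rw [map_list_prod, List.map_map,
      List.map_congr_left (f := LinearMap.det ∘ B.reflection) (g := fun _ => -1)
        (fun e he => det_reflection (hl0 e he)),
      List.map_const', List.prod_replicate]
  have hodd : Odd l.length := by
    rw [hdet_l] at hdet
    exact (neg_one_pow_eq_neg_one_iff_odd (by norm_num)).mp hdet
  have : l.length ≠ n := fun h => Nat.not_even_iff_odd.mpr hodd (h ▸ hn)
  exact ⟨l, by omega, hl0, rfl⟩

end IsProdReflections

end ProdReflections

section FixedSubspace

theorem _root_.LinearMap.IsOrthogonal.mul {g : Module.End K V} (hg : B.IsOrthogonal g)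
    (hf : B.IsOrthogonal f) : B.IsOrthogonal ⇑(g * f) := fun x y => by
  rw [Module.End.mul_apply, Module.End.mul_apply, hg, hf]

theorem _root_.LinearMap.IsOrthogonal.injective (hB : B.Nondegenerate) (hf : B.IsOrthogonal f) :
    Function.Injective f := by
  rw [← LinearMap.ker_eq_bot, Submodule.eq_bot_iff]
  intro x hx
  exact hB.1 x fun y => by rw [← hf, LinearMap.mem_ker.mp hx, map_zero, LinearMap.zero_apply]

theorem mem_ker_sub_one {x : V} : x ∈ LinearMap.ker (f - 1) ↔ f x = x := by
  simp [sub_eq_zero]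

theorem le_ker_mul_sub_one {g : Module.End K V} (hg : S ≤ LinearMap.ker (g - 1))
    (hf : S ≤ LinearMap.ker (f - 1)) : S ≤ LinearMap.ker (g * f - 1) := fun x hx => by
  rw [mem_ker_sub_one, Module.End.mul_apply, mem_ker_sub_one.mp (hf hx), mem_ker_sub_one.mp (hg hx)]

theorem le_ker_reflection_sub_one (hBs : B.IsSymm) {e : V} (he : e ∈ B.orthogonal S) :
    S ≤ LinearMap.ker (B.reflection e - 1) := fun s hs =>
  mem_ker_sub_one.mpr <| reflection_apply_of_isOrtho <| hBs.isRefl s e (he s hs)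

theorem apply_mem_orthogonal (hf : B.IsOrthogonal f) (hfS : S ≤ LinearMap.ker (f - 1)) {v : V}
    (hv : v ∈ B.orthogonal S) : f v ∈ B.orthogonal S := fun s hs => by
  change B s (f v) = 0
  rw [← mem_ker_sub_one.mp (hfS hs), hf]
  exact hv s hs

theorem eq_one_of_orthogonal_eq_bot (hS : IsCompl S (B.orthogonal S))
    (hfS : S ≤ LinearMap.ker (f - 1)) (hbot : B.orthogonal S = ⊥) : f = 1 := by
  have hStop : S = ⊤ := by simpa [hbot] using hS.sup_eq_top
  rw [← sub_eq_zero, ← LinearMap.ker_eq_top, eq_top_iff, ← hStop]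
  exact hfS

variable [FiniteDimensional K V]

theorem isCompl_sup_span_singleton (hBs : B.IsSymm) (hS : IsCompl S (B.orthogonal S)) {v : V}
    (hv : v ∈ B.orthogonal S) (hvv : B v v ≠ 0) :
    IsCompl (S ⊔ K ∙ v) (B.orthogonal (S ⊔ K ∙ v)) := by
  rw [isCompl_orthogonal_iff_disjoint hBs.isRefl, Submodule.disjoint_def]
  rintro x hx hxo
  obtain ⟨s, hs, y, hy, rfl⟩ := Submodule.mem_sup.mp hx
  obtain ⟨a, rfl⟩ := Submodule.mem_span_singleton.mp hy
  have hvs : B v s = 0 := hBs.isRefl s v (hv s hs)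
  have ha : a = 0 := by
    have := hxo v (Submodule.mem_sup_right (Submodule.mem_span_singleton_self v))
    simp only [map_add, map_smul, smul_eq_mul, hvs, zero_add] at this
    exact (mul_eq_zero.mp this).resolve_right hvv
  subst ha
  rw [zero_smul, add_zero] at hxo ⊢
  exact Submodule.disjoint_def.mp hS.disjoint s hs (orthogonal_le le_sup_left hxo)

theorem finrank_orthogonal_sup_span_singleton_lt {v : V} (hv : v ∈ B.orthogonal S)
    (hvv : B v v ≠ 0) : finrank K (B.orthogonal (S ⊔ K ∙ v)) < finrank K (B.orthogonal S) :=
  Submodule.finrank_lt_finrank_of_lt <| SetLike.lt_iff_le_and_exists.mpr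
    ⟨orthogonal_le le_sup_left, v, hv, fun h =>
      hvv <| h v (Submodule.mem_sup_right (Submodule.mem_span_singleton_self v))⟩

end FixedSubspace

section Isotropic

theorem apply_eq_zero_of_forall_apply_self_eq_zero [NeZero (2 : K)] (hBs : B.IsSymm)
    {W : Submodule K V} (h : ∀ x ∈ W, B x x = 0) {x y : V} (hx : x ∈ W) (hy : y ∈ W) :
    B x y = 0 := by
  have hxy := h (x + y) (W.add_mem hx hy)
  simp only [map_add, LinearMap.add_apply, h x hx, h y hy, hBs.eq y x] at hxy
  have : (2 : K) * B x y = 0 := by rw [two_mul]; simpa using hxy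
  exact (mul_eq_zero.mp this).resolve_left two_ne_zero

open Polynomial in
theorem apply_self_eq_zero_of_anisotropic [Infinite K] (C : LinearMap.BilinForm K V) {x u : V}
    (hu : B u u ≠ 0)
    (h : ∀ t : K, B (x + t • u) (x + t • u) ≠ 0 → C (x + t • u) (x + t • u) = 0) :
    C x x = 0 := by
  have expand : ∀ (D : LinearMap.BilinForm K V) (t : K), D (x + t • u) (x + t • u) =
      (Polynomial.C (D u u) * X ^ 2 + Polynomial.C (D x u + D u x) * X
        + Polynomial.C (D x x)).eval t := by
    intro D t
    simp only [map_add, map_smul, LinearMap.add_apply, LinearMap.smul_apply, smul_eq_mul,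
      eval_add, eval_mul, eval_C, eval_pow, eval_X]
    ring
  have hP : Polynomial.C (B u u) * X ^ 2 + Polynomial.C (B x u + B u x) * X
      + Polynomial.C (B x x) ≠ 0 := by
    intro h0
    apply hu
    simpa using congr_arg (coeff · 2) h0
  have hQ := eq_zero_of_eval_eq_zero_of_eval_ne_zero hP fun t ht => by
    rw [← expand] at ht ⊢
    exact h t ht
  simpa [← expand] using congr_arg (eval 0) hQ

theorem orthogonal_eq_bot_of_isotropic [NeZero (2 : K)] (hB : B.Nondegenerate) (hBs : B.IsSymm)
    (hS : IsCompl S (B.orthogonal S)) (h : ∀ u ∈ B.orthogonal S, B u u = 0) :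
    B.orthogonal S = ⊥ := by
  refine (Submodule.eq_bot_iff _).mpr fun x hx => hB.1 x fun y => ?_
  obtain ⟨s, z, hs, hz, rfl⟩ := Submodule.codisjoint_iff_exists_add_eq.mp hS.codisjoint y
  rw [map_add, hBs.isRefl _ _ (hx s hs), apply_eq_zero_of_forall_apply_self_eq_zero hBs h hx hz,
    add_zero]

theorem isotropic_sub_one_apply [Infinite K] (hS : IsCompl S (B.orthogonal S))
    (hfS : S ≤ LinearMap.ker (f - 1)) {u : V} (hu : u ∈ B.orthogonal S) (huu : B u u ≠ 0)
    (hbad : ∀ v ∈ B.orthogonal S, B v v ≠ 0 → B (f v - v) (f v - v) = 0) (x : V) :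
    B ((f - 1) x) ((f - 1) x) = 0 := by
  obtain ⟨s, h, hs, hh, rfl⟩ := Submodule.codisjoint_iff_exists_add_eq.mp hS.codisjoint x
  rw [map_add, LinearMap.mem_ker.mp (hfS hs), zero_add]
  refine apply_self_eq_zero_of_anisotropic (B.compl₁₂ (f - 1) (f - 1)) huu fun t ht => ?_
  simp only [compl₁₂_apply, LinearMap.sub_apply, Module.End.one_apply]
  exact hbad _ (add_mem hh (Submodule.smul_mem _ t hu)) ht

variable [FiniteDimensional K V]

theorem two_mul_finrank_le_of_isotropic (hB : B.Nondegenerate) (hBs : B.IsSymm)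
    (hS : Disjoint S (B.orthogonal S)) {W : Submodule K V} (hW : W ≤ B.orthogonal S)
    (hiso : ∀ x ∈ W, ∀ y ∈ W, B x y = 0) : 2 * finrank K W ≤ finrank K (B.orthogonal S) := by
  have hle : S ⊔ W ≤ B.orthogonal W :=
    sup_le (fun s hs w hw => hBs.isRefl _ _ (hW hw s hs)) fun x hx y hy => hiso y hy x hx
  have h1 := Submodule.finrank_mono hle
  have h2 := Submodule.finrank_sup_add_finrank_inf_eq S W
  rw [(hS.mono_right hW).eq_bot, finrank_bot, add_zero] at h2
  have h3 := Submodule.finrank_le (S ⊔ W)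
  rw [finrank_orthogonal hB] at h1 ⊢
  omega

theorem sub_one_mul_sub_one_eq_zero (hB : B.Nondegenerate) (hf : B.IsOrthogonal f)
    (hiso : ∀ x y, B ((f - 1) x) ((f - 1) y) = 0) : (f - 1) * (f - 1) = 0 := by
  ext x
  refine hB.1 _ fun z => ?_
  obtain ⟨y, rfl⟩ := LinearMap.surjective_of_injective (hf.injective hB) z
  calc B (((f - 1) * (f - 1)) x) (f y) = B (f ((f - 1) x)) (f y) - B ((f - 1) x) (f y) := by
        simp
    _ = B ((f - 1) x) y - B ((f - 1) x) (f y) := by rw [hf]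
    _ = -B ((f - 1) x) ((f - 1) y) := by
        rw [LinearMap.sub_apply _ _ y, map_sub, Module.End.one_apply]
        ring
    _ = 0 := by rw [hiso, neg_zero]

variable [Infinite K] [NeZero (2 : K)]

theorem det_eq_one_of_isotropic_sub_apply (hB : B.Nondegenerate) (hBs : B.IsSymm)
    (hS : IsCompl S (B.orthogonal S)) (hf : B.IsOrthogonal f) (hfS : S ≤ LinearMap.ker (f - 1))
    {u : V} (hu : u ∈ B.orthogonal S) (huu : B u u ≠ 0)
    (hbad : ∀ v ∈ B.orthogonal S, B v v ≠ 0 → B (f v - v) (f v - v) = 0) :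
    LinearMap.det f = 1 := by
  have hiso : ∀ x y, B ((f - 1) x) ((f - 1) y) = 0 := fun x y =>
    apply_eq_zero_of_forall_apply_self_eq_zero hBs (W := LinearMap.range (f - 1))
      (by rintro _ ⟨z, rfl⟩; exact isotropic_sub_one_apply hS hfS hu huu hbad z)
      (LinearMap.mem_range_self _ x) (LinearMap.mem_range_self _ y)
  have hnil : IsNilpotent (f - 1) := ⟨2, by rw [sq, sub_one_mul_sub_one_eq_zero hB hf hiso]⟩
  simpa using LinearMap.det_one_add_of_isNilpotent hnil

theorem even_finrank_orthogonal_of_isotropic_sub_apply (hB : B.Nondegenerate) (hBs : B.IsSymm)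
    (hS : IsCompl S (B.orthogonal S)) (hf : B.IsOrthogonal f) (hfS : S ≤ LinearMap.ker (f - 1))
    {u : V} (hu : u ∈ B.orthogonal S) (huu : B u u ≠ 0)
    (hbad : ∀ v ∈ B.orthogonal S, B v v ≠ 0 → f v ≠ v ∧ B (f v - v) (f v - v) = 0) :
    Even (finrank K (B.orthogonal S)) := by
  have hrange : LinearMap.range (f - 1) ≤ B.orthogonal S := by
    rintro _ ⟨x, rfl⟩
    obtain ⟨s, h, hs, hh, rfl⟩ := Submodule.codisjoint_iff_exists_add_eq.mp hS.codisjoint x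
    rw [map_add, LinearMap.mem_ker.mp (hfS hs), zero_add, LinearMap.sub_apply,
      Module.End.one_apply]
    exact sub_mem (apply_mem_orthogonal hf hfS hh) hh
  have hr := two_mul_finrank_le_of_isotropic hB hBs hS.disjoint hrange fun x hx y hy =>
    apply_eq_zero_of_forall_apply_self_eq_zero hBs (W := LinearMap.range (f - 1))
      (by rintro _ ⟨z, rfl⟩; exact isotropic_sub_one_apply hS hfS hu huu (hbad · · · |>.2) z) hx hy
  have hk := two_mul_finrank_le_of_isotropic hB hBs hS.disjoint
    (inf_le_right : LinearMap.ker (f - 1) ⊓ B.orthogonal S ≤ _) fun x hx y hy =>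
    apply_eq_zero_of_forall_apply_self_eq_zero hBs (W := LinearMap.ker (f - 1) ⊓ B.orthogonal S)
      (fun z hz => by_contra fun hzz => (hbad z hz.2 hzz).1 (mem_ker_sub_one.mp hz.1)) hx hy
  have := Submodule.finrank_range_add_finrank_ker_inf hS hfS
  exact ⟨finrank K (LinearMap.range (f - 1)), by omega⟩

end Isotropic

section CartanDieudonne

variable [FiniteDimensional K V]

theorem isProdReflections_of_apply_eq_or_anisotropic_sub (hBs : B.IsSymm)
    (hS : IsCompl S (B.orthogonal S))
    (IH : ∀ S' : Submodule K V, IsCompl S' (B.orthogonal S') →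
      finrank K (B.orthogonal S') < finrank K (B.orthogonal S) →
      ∀ g : Module.End K V, B.IsOrthogonal g → S' ≤ LinearMap.ker (g - 1) →
      B.IsProdReflections g (finrank K (B.orthogonal S')))
    (hf : B.IsOrthogonal f) (hfS : S ≤ LinearMap.ker (f - 1)) {v : V}
    (hv : v ∈ B.orthogonal S) (hvv : B v v ≠ 0) (hfv : f v = v ∨ B (f v - v) (f v - v) ≠ 0) :
    B.IsProdReflections f (finrank K (B.orthogonal S)) := by
  have hlt := finrank_orthogonal_sup_span_singleton_lt hv hvv
  have of_fixed : ∀ g : Module.End K V, B.IsOrthogonal g → S ≤ LinearMap.ker (g - 1) →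
      g v = v → B.IsProdReflections g (finrank K (B.orthogonal S) - 1) := fun g hg hgS hgv =>
    (IH _ (isCompl_sup_span_singleton hBs hS hv hvv) hlt g hg <| sup_le hgS <|
      (Submodule.span_singleton_le_iff_mem _ _).mpr (mem_ker_sub_one.mpr hgv)).mono (by omega)
  rcases hfv with hfv | he
  · exact (of_fixed f hf hfS hfv).mono (Nat.sub_le _ _)
  · have hmem : f v - v ∈ B.orthogonal S := sub_mem (apply_mem_orthogonal hf hfS hv) hv
    have := of_fixed _ ((isOrthogonal_reflection hBs he).mul hf)
      (le_ker_mul_sub_one (le_ker_reflection_sub_one hBs hmem) hfS)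
      (reflection_sub_apply hBs (hf v v) he)
    exact (this.of_reflection_mul he).mono (by omega)

variable [CharZero K]

theorem isProdReflections_of_le_ker_sub_one (hB : B.Nondegenerate) (hBs : B.IsSymm)
    (hS : IsCompl S (B.orthogonal S)) (hf : B.IsOrthogonal f) (hfS : S ≤ LinearMap.ker (f - 1)) :
    B.IsProdReflections f (finrank K (B.orthogonal S)) := by
  induction hd : finrank K (B.orthogonal S) using Nat.strong_induction_on generalizing S f with
  | _ d IH =>
  subst hd
  have good : ∀ g : Module.End K V, B.IsOrthogonal g → S ≤ LinearMap.ker (g - 1) →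
      (∃ v ∈ B.orthogonal S, B v v ≠ 0 ∧ (g v = v ∨ B (g v - v) (g v - v) ≠ 0)) →
      B.IsProdReflections g (finrank K (B.orthogonal S)) := fun g hg hgS ⟨v, hv, hvv, hgv⟩ =>
    isProdReflections_of_apply_eq_or_anisotropic_sub hBs hS
      (fun _ hS' hlt _ hg' hgS' => IH _ hlt hS' hg' hgS' rfl) hg hgS hv hvv hgv
  by_cases hfgood : ∃ v ∈ B.orthogonal S, B v v ≠ 0 ∧ (f v = v ∨ B (f v - v) (f v - v) ≠ 0)
  · exact good f hf hfS hfgood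
  push Not at hfgood
  by_cases hiso : ∀ u ∈ B.orthogonal S, B u u = 0
  · rw [eq_one_of_orthogonal_eq_bot hS hfS (orthogonal_eq_bot_of_isotropic hB hBs hS hiso)]
    exact isProdReflections_one _
  push Not at hiso
  obtain ⟨u, hu, huu⟩ := hiso
  have hdet := det_eq_one_of_isotropic_sub_apply hB hBs hS hf hfS hu huu fun v hv hvv =>
    (hfgood v hv hvv).2
  have heven := even_finrank_orthogonal_of_isotropic_sub_apply hB hBs hS hf hfS hu huu hfgood
  have hg := (isOrthogonal_reflection hBs huu).mul hf
  have hgS := le_ker_mul_sub_one (le_ker_reflection_sub_one hBs hu) hfS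
  have hgdet : LinearMap.det (B.reflection u * f) = -1 := by
    rw [map_mul, det_reflection huu, hdet, mul_one]
  -- Every isometry in the present case has determinant `1`, so `r_u f` is not in it.
  have hg_prod := good _ hg hgS <| by
    by_contra! hbad
    have := det_eq_one_of_isotropic_sub_apply hB hBs hS hg hgS hu huu fun v hv hvv =>
      (hbad v hv hvv).2
    norm_num [hgdet] at this
  have hpos := (finrank_orthogonal_sup_span_singleton_lt hu huu).trans_le' (Nat.zero_le _)
  exact ((hg_prod.pred_of_det_eq_neg_one hgdet heven).of_reflection_mul huu).mono (by omega)

end CartanDieudonne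

end LinearMap.BilinForm

noncomputable def etaForm (p q : ℕ) : LinearMap.BilinForm ℝ (Fin (p + q) → ℝ) :=
  Matrix.toBilin' (Matrix.diagonal fun i => if (i : ℕ) < p then 1 else -1)

theorem etaForm_apply (p q : ℕ) (v w : Fin (p + q) → ℝ) : etaForm p q v w = etaPQ p q v w := by
  simp only [etaForm, Matrix.toBilin'_apply', etaPQ, dotProduct, Matrix.mulVec_diagonal]
  refine Finset.sum_congr rfl fun i _ => ?_
  split_ifs <;> ring

theorem etaForm_nondegenerate (p q : ℕ) : (etaForm p q).Nondegenerate := by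
  refine LinearMap.BilinForm.nondegenerate_toBilin'_of_det_ne_zero' _ ?_
  rw [Matrix.det_diagonal]
  exact Finset.prod_ne_zero_iff.mpr fun i _ => by split_ifs <;> norm_num

theorem etaForm_isSymm (p q : ℕ) : (etaForm p q).IsSymm :=
  Matrix.isSymm_toBilin'_iff_isSymm.mpr (Matrix.isSymm_diagonal _)

theorem reflection_etaForm (p q : ℕ) (e : Fin (p + q) → ℝ) :
    ⇑((etaForm p q).reflection e) = reflectPQ p q e := by
  ext v
  simp [LinearMap.BilinForm.reflection_apply, etaForm_apply, reflectPQ]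

open LinearMap.BilinForm in
/-- Cartan–Dieudonné: every isometry of the pseudo-Euclidean space ℝ^{p,q} is the
composition of at most p+q reflections across non-degenerate hyperplanes. -/
theorem cartan_dieudonne (p q : ℕ)
    (f : (Fin (p + q) → ℝ) ≃ₗ[ℝ] (Fin (p + q) → ℝ))
    (hf : ∀ v w, etaPQ p q (f v) (f w) = etaPQ p q v w) :
    ∃ l : List (Fin (p + q) → ℝ), l.length ≤ p + q ∧
      (∀ e ∈ l, etaPQ p q e e ≠ 0) ∧
      ∀ v, f v = l.foldr (reflectPQ p q) v := by
  obtain ⟨l, hl, hl0, hfl⟩ := isProdReflections_of_le_ker_sub_one (etaForm_nondegenerate p q)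
    (etaForm_isSymm p q) (S := ⊥) (by simpa using isCompl_bot_top) (f := f.toLinearMap)
    (fun v w => by simpa [etaForm_apply] using hf v w) bot_le
  rw [orthogonal_bot, finrank_top, Module.finrank_fin_fun] at hl
  refine ⟨l, hl, by simpa [etaForm_apply] using hl0, fun v => ?_⟩
  rw [← funext (reflection_etaForm p q), ← Module.End.list_prod_map_apply, hfl]
  rfl
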